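/- arXiv:1902.01226 — 2 statements merged into one kernel-verified Lean document; each statement's English description precedes it below -/
import Mathlib

section
/- For probability measures μ, ν on ℝ^d with finite second moments, if T is any monotone map in the sense that ⟨T(x) - T(y), x - y⟩ ≥ 0 for all x, y, and T pushes μ to ν, then for any other map S pushing μ to ν one has ∫ |x - T(x)|² dμ ≤ ∫ |x - S(x)|² dμ when T is the gradient of a convex function. In particular, in dimension 1, if T is nondecreasing and T_#μ = ν, then ∫ |x - T(x)|² dμ = W₂²(μ, ν). -/
/-!
Call `T` a subgradient of `u` if `u x + ⟪T x, y - x⟫ ≤ u y` for all `x, y`; the gradient of a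
differentiable convex function is one, and in dimension one so is a nondecreasing `T`, of its
primitive. With `u*` the convex conjugate of `u`, the Fenchel–Young inequality
`⟪x, y⟫ ≤ u x + u* y` turns into `‖x - y‖² ≥ (‖x‖² - 2 u x) + (‖y‖² - 2 u* y)`, with equality
for `y = T x`. These are Kantorovich potentials: the right-hand side has the same integral along
every map `S` pushing `μ` to `ν`, namely its value along `T`, which is therefore optimal.
-/

open MeasureTheory Set

noncomputable def W2sq {E : Type*} [NormedAddCommGroup E] [MeasurableSpace E]
    (μ ν : Measure E) : ℝ :=
  sInf {c | ∃ T : E → E, Measurable T ∧ Measure.map T μ = ν ∧ c = ∫ x, ‖x - T x‖ ^ 2 ∂μ}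

open Filter
open scoped RealInnerProductSpace

section ConvexAnalysis

variable {E : Type*} [NormedAddCommGroup E] [InnerProductSpace ℝ E]

-- Valued in `EReal`, so that an unbounded supremum is `⊤` rather than a junk value.
noncomputable def legendreTransform (u : E → ℝ) (y : E) : EReal :=
  ⨆ z, ((⟪z, y⟫ - u z : ℝ) : EReal)

theorem lowerSemicontinuous_legendreTransform (u : E → ℝ) :
    LowerSemicontinuous (legendreTransform u) :=
  lowerSemicontinuous_iSup fun _ => (continuous_coe_real_ereal.comp
    ((continuous_const.inner continuous_id).sub continuous_const)).lowerSemicontinuous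

theorem inner_sub_le_legendreTransform (u : E → ℝ) (x y : E) :
    ((⟪x, y⟫ - u x : ℝ) : EReal) ≤ legendreTransform u y :=
  le_iSup (fun z => ((⟪z, y⟫ - u z : ℝ) : EReal)) x

theorem legendreTransform_eq_of_subgradient {u : E → ℝ} {x g : E}
    (hg : ∀ y, u x + ⟪g, y - x⟫ ≤ u y) :
    legendreTransform u g = ((⟪x, g⟫ - u x : ℝ) : EReal) := by
  refine le_antisymm (iSup_le fun z => EReal.coe_le_coe_iff.2 ?_)
    (inner_sub_le_legendreTransform u x g)
  have := hg z
  rw [inner_sub_right, real_inner_comm z g, real_inner_comm x g] at this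
  linarith

theorem ConvexOn.add_inner_gradient_sub_le [CompleteSpace E] {u : E → ℝ}
    (hu : ConvexOn ℝ univ u) {x : E} (hx : DifferentiableAt ℝ u x) (y : E) :
    u x + ⟪gradient u x, y - x⟫ ≤ u y := by
  set g : ℝ → ℝ := fun t => u (AffineMap.lineMap x y t)
  have hg : ConvexOn ℝ univ g := by
    simpa [g, Function.comp_def] using hu.comp_affineMap (AffineMap.lineMap x y)
  have hderiv : HasDerivAt g ⟪gradient u x, y - x⟫ 0 := by
    have hline := AffineMap.hasDerivAt_lineMap (a := x) (b := y) (x := (0 : ℝ))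
    rw [← AffineMap.lineMap_apply_zero (k := ℝ) x y] at hx
    simpa [g, Function.comp_def, inner_gradient_left] using
      hx.hasFDerivAt.comp_hasDerivAt (0 : ℝ) hline
  have := hg.le_slope_of_hasDerivAt (mem_univ 0) (mem_univ 1) one_pos hderiv
  simp only [slope_def_field, g, AffineMap.lineMap_apply_zero, AffineMap.lineMap_apply_one,
    sub_zero, div_one] at this
  linarith

end ConvexAnalysis

section Transport

variable {α E : Type*} [MeasurableSpace α] {μ : Measure α} [NormedAddCommGroup E] {f g : α → E}

theorem integrable_norm_sub_sq
    (hf : AEStronglyMeasurable f μ) (hg : AEStronglyMeasurable g μ)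
    (hf2 : Integrable (fun a => ‖f a‖ ^ 2) μ) (hg2 : Integrable (fun a => ‖g a‖ ^ 2) μ) :
    Integrable (fun a => ‖f a - g a‖ ^ 2) μ :=
  (memLp_two_iff_integrable_sq_norm (hf.sub hg)).1
    (((memLp_two_iff_integrable_sq_norm hf).2 hf2).sub ((memLp_two_iff_integrable_sq_norm hg).2 hg2))

theorem integrable_inner_of_integrable_norm_sq [InnerProductSpace ℝ E]
    (hf : AEStronglyMeasurable f μ) (hg : AEStronglyMeasurable g μ)
    (hf2 : Integrable (fun a => ‖f a‖ ^ 2) μ) (hg2 : Integrable (fun a => ‖g a‖ ^ 2) μ) :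
    Integrable (fun a => ⟪f a, g a⟫) μ := by
  refine (hf2.add hg2).mono' (hf.inner hg) (Eventually.of_forall fun a => ?_)
  rw [Real.norm_eq_abs, Pi.add_apply]
  nlinarith [abs_real_inner_le_norm (f a) (g a), sq_nonneg (‖f a‖ - ‖g a‖)]

end Transport

-- Weak Kantorovich duality, with complementary slackness on the graph of `T`.
theorem integral_le_of_potentials {α β : Type*} [MeasurableSpace α] [MeasurableSpace β]
    {μ : Measure α} {ν : Measure β} {c : α → β → ℝ} {φ : α → ℝ} {ψ : β → ℝ} {T S : α → β}
    (hT : Measurable T) (hTμ : μ.map T = ν) (hS : Measurable S) (hSμ : μ.map S = ν)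
    (hφ : Integrable φ μ) (hψ : Integrable ψ ν) (hcS : Integrable (fun x => c x (S x)) μ)
    (hle : ∀ᵐ x ∂μ, φ x + ψ (S x) ≤ c x (S x)) (heq : ∀ᵐ x ∂μ, c x (T x) = φ x + ψ (T x)) :
    ∫ x, c x (T x) ∂μ ≤ ∫ x, c x (S x) ∂μ := by
  have hψS : Integrable (fun x => ψ (S x)) μ := (hSμ ▸ hψ).comp_measurable hS
  have hψ_comp : ∀ {R : α → β}, Measurable R → μ.map R = ν → ∫ x, ψ (R x) ∂μ = ∫ y, ψ y ∂ν :=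
    fun hR hRμ => by rw [← hRμ, integral_map hR.aemeasurable (hRμ ▸ hψ.aestronglyMeasurable)]
  calc ∫ x, c x (T x) ∂μ = ∫ x, φ x ∂μ + ∫ x, ψ (T x) ∂μ := by
        rw [integral_congr_ae heq, integral_add hφ ((hTμ ▸ hψ).comp_measurable hT)]
    _ = ∫ x, (φ x + ψ (S x)) ∂μ := by rw [integral_add hφ hψS, hψ_comp hT hTμ, hψ_comp hS hSμ]
    _ ≤ ∫ x, c x (S x) ∂μ := integral_mono_ae (hφ.add hψS) hcS hle

section Optimality

variable {E : Type*} [NormedAddCommGroup E] [InnerProductSpace ℝ E] [MeasurableSpace E]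
  {μ ν : Measure E} {u : E → ℝ} {T S : E → E}

theorem integrable_of_subgradient [IsFiniteMeasure μ] (hum : AEStronglyMeasurable u μ)
    (hμ1 : Integrable (fun x => ‖x‖) μ) (hTi : Integrable (fun x => ⟪x, T x⟫) μ)
    (hsub : ∀ x y, u x + ⟪T x, y - x⟫ ≤ u y) : Integrable u μ := by
  refine (((integrable_const |u 0|).add (hμ1.const_mul ‖T 0‖)).add hTi.abs).mono' hum
    (Eventually.of_forall fun x => ?_)
  have hlow := hsub 0 x
  have hhigh := hsub x 0
  rw [sub_zero] at hlow
  rw [zero_sub, inner_neg_right, real_inner_comm] at hhigh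
  have hT0 := abs_le.1 (abs_real_inner_le_norm (T 0) x)
  simp only [Pi.add_apply, Real.norm_eq_abs, abs_le]
  constructor <;> nlinarith [le_abs_self (u 0), neg_abs_le (u 0), le_abs_self ⟪x, T x⟫,
    abs_nonneg ⟪x, T x⟫, norm_nonneg (T 0), norm_nonneg x]

theorem ae_legendreTransform_ne_top [OpensMeasurableSpace E] (hT : Measurable T)
    (hTμ : μ.map T = ν) (hsub : ∀ x y, u x + ⟪T x, y - x⟫ ≤ u y) :
    ∀ᵐ y ∂ν, legendreTransform u y ≠ ⊤ := by
  have hmeas : MeasurableSet {y | legendreTransform u y ≠ ⊤} :=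
    ((lowerSemicontinuous_legendreTransform u).measurable (measurableSet_singleton ⊤)).compl
  rw [← hTμ]
  refine (ae_map_iff hT.aemeasurable hmeas).2 ?_
  exact Eventually.of_forall fun x => by
    rw [legendreTransform_eq_of_subgradient (hsub x)]
    exact EReal.coe_ne_top _

variable [BorelSpace E] [SecondCountableTopology E]

theorem integral_norm_sub_sq_le_of_subgradient [IsFiniteMeasure μ]
    (hμ2 : Integrable (fun x => ‖x‖ ^ 2) μ) (hν2 : Integrable (fun x => ‖x‖ ^ 2) ν)
    (hT : Measurable T) (hTμ : μ.map T = ν) (hsub : ∀ x y, u x + ⟪T x, y - x⟫ ≤ u y)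
    (hS : Measurable S) (hSμ : μ.map S = ν) :
    ∫ x, ‖x - T x‖ ^ 2 ∂μ ≤ ∫ x, ‖x - S x‖ ^ 2 ∂μ := by
  have hT2 : Integrable (fun x => ‖T x‖ ^ 2) μ := (hTμ ▸ hν2).comp_measurable hT
  have hS2 : Integrable (fun x => ‖S x‖ ^ 2) μ := (hSμ ▸ hν2).comp_measurable hS
  have hTi : Integrable (fun x => ⟪x, T x⟫) μ := integrable_inner_of_integrable_norm_sq
    aestronglyMeasurable_id hT.aestronglyMeasurable hμ2 hT2
  have hμ1 : Integrable (fun x => ‖x‖) μ :=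
    (((memLp_two_iff_integrable_sq_norm aestronglyMeasurable_id).2 hμ2).integrable
      one_le_two).norm
  set ψ : E → ℝ := fun y => (legendreTransform u y).toReal
  have hψ : Measurable ψ := (lowerSemicontinuous_legendreTransform u).measurable.ereal_toReal
  have hψT : ∀ x, ψ (T x) = ⟪x, T x⟫ - u x := fun x => by
    simp only [ψ, legendreTransform_eq_of_subgradient (hsub x), EReal.toReal_coe]
  -- `u` is recovered from `ψ` along `T`, which makes it measurable
  have hu : Integrable u μ := by
    refine integrable_of_subgradient ?_ hμ1 hTi hsub
    have : u = fun x => ⟪x, T x⟫ - ψ (T x) := funext fun x => by rw [hψT]; ring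
    rw [this]
    exact ((measurable_id.inner hT).sub (hψ.comp hT)).aestronglyMeasurable
  have hψν : Integrable ψ ν := by
    rw [← hTμ, integrable_map_measure hψ.aestronglyMeasurable hT.aemeasurable]
    rw [show ψ ∘ T = fun x => ⟪x, T x⟫ - u x from funext hψT]
    exact hTi.sub hu
  have hfin : ∀ᵐ x ∂μ, legendreTransform u (S x) ≠ ⊤ :=
    ae_of_ae_map hS.aemeasurable (hSμ ▸ ae_legendreTransform_ne_top hT hTμ hsub)
  refine integral_le_of_potentials (c := fun x y => ‖x - y‖ ^ 2) (φ := fun x => ‖x‖ ^ 2 - 2 * u x)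
    (ψ := fun y => ‖y‖ ^ 2 - 2 * ψ y) hT hTμ hS hSμ (hμ2.sub (hu.const_mul 2))
    (hν2.sub (hψν.const_mul 2))
    (integrable_norm_sub_sq aestronglyMeasurable_id hS.aestronglyMeasurable hμ2 hS2) ?_ ?_
  · filter_upwards [hfin] with x hx
    have hFY := EReal.toReal_le_toReal (inner_sub_le_legendreTransform u x (S x))
      (EReal.coe_ne_bot _) hx
    rw [EReal.toReal_coe] at hFY
    rw [norm_sub_sq_real]
    linarith
  · exact Eventually.of_forall fun x => by rw [norm_sub_sq_real, hψT]; ring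

end Optimality

theorem W2sq_eq_of_forall_le {E : Type*} [NormedAddCommGroup E] [MeasurableSpace E]
    {μ ν : Measure E} {T : E → E} (hT : Measurable T) (hTμ : μ.map T = ν)
    (hle : ∀ S : E → E, Measurable S → μ.map S = ν →
      ∫ x, ‖x - T x‖ ^ 2 ∂μ ≤ ∫ x, ‖x - S x‖ ^ 2 ∂μ) :
    W2sq μ ν = ∫ x, ‖x - T x‖ ^ 2 ∂μ :=
  IsLeast.csInf_eq ⟨⟨T, hT, hTμ, rfl⟩, by rintro _ ⟨S, hS, hSμ, rfl⟩; exact hle S hS hSμ⟩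

theorem Monotone.intervalIntegral_add_mul_sub_le {T : ℝ → ℝ} (hT : Monotone T) (a x y : ℝ) :
    (∫ t in a..x, T t) + T x * (y - x) ≤ ∫ t in a..y, T t := by
  suffices T x * (y - x) ≤ ∫ t in x..y, T t by
    rw [← intervalIntegral.integral_interval_sub_left (μ := volume) (a := a)
      hT.intervalIntegrable hT.intervalIntegrable] at this
    linarith
  rcases le_total x y with hxy | hyx
  · have hmono := intervalIntegral.integral_mono_on (μ := volume) hxy intervalIntegrable_const
      hT.intervalIntegrable fun t ht => hT ht.1
    simp only [intervalIntegral.integral_const, smul_eq_mul] at hmono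
    linarith
  · have hmono := intervalIntegral.integral_mono_on (μ := volume) hyx hT.intervalIntegrable
      intervalIntegrable_const fun t ht => hT ht.2
    simp only [intervalIntegral.integral_const, smul_eq_mul] at hmono
    rw [intervalIntegral.integral_symm]
    linarith

/-- (i) in ℝ^d, a monotone transport map `T` that is the gradient of a
convex function is optimal: its quadratic cost is no larger than that of any other
transport map `S`; (ii) in dimension 1, a nondecreasing transport map realizes
`W₂²(μ, ν)`. -/
theorem gradient_of_convex_is_optimal_and_monotone_1d_optimal :
    (∀ (d : ℕ) (μ ν : Measure (EuclideanSpace ℝ (Fin d)))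
        (_ : IsProbabilityMeasure μ) (_ : IsProbabilityMeasure ν)
        (_ : Integrable (fun x => ‖x‖ ^ 2) μ) (_ : Integrable (fun x => ‖x‖ ^ 2) ν)
        (u : EuclideanSpace ℝ (Fin d) → ℝ)
        (_ : ConvexOn ℝ Set.univ u) (_ : Differentiable ℝ u)
        (T : EuclideanSpace ℝ (Fin d) → EuclideanSpace ℝ (Fin d))
        (_ : T = fun x => gradient u x)
        (_ : ∀ x y, (0 : ℝ) ≤ inner ℝ (T x - T y) (x - y))
        (_ : Measurable T) (_ : Measure.map T μ = ν)
        (S : EuclideanSpace ℝ (Fin d) → EuclideanSpace ℝ (Fin d))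
        (_ : Measurable S) (_ : Measure.map S μ = ν),
        ∫ x, ‖x - T x‖ ^ 2 ∂μ ≤ ∫ x, ‖x - S x‖ ^ 2 ∂μ) ∧
    (∀ (μ ν : Measure ℝ)
        (_ : IsProbabilityMeasure μ) (_ : IsProbabilityMeasure ν)
        (_ : Integrable (fun x => x ^ 2) μ) (_ : Integrable (fun x => x ^ 2) ν)
        (T : ℝ → ℝ) (_ : Monotone T) (_ : Measurable T) (_ : Measure.map T μ = ν),
        ∫ x, ‖x - T x‖ ^ 2 ∂μ = W2sq μ ν) := by
  refine ⟨fun d μ ν _ _ hμ2 hν2 u hu hdiff T hTu _ hT hTμ S hS hSμ => ?_,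
    fun μ ν _ _ hμ2 hν2 T hmono hT hTμ => ?_⟩
  · subst hTu
    exact integral_norm_sub_sq_le_of_subgradient hμ2 hν2 hT hTμ
      (fun x => hu.add_inner_gradient_sub_le (hdiff x)) hS hSμ
  · have hsq : (fun x : ℝ => x ^ 2) = fun x => ‖x‖ ^ 2 :=
      funext fun x => by rw [Real.norm_eq_abs, sq_abs]
    rw [hsq] at hμ2 hν2
    have hsub : ∀ x y, (∫ t in (0 : ℝ)..x, T t) + ⟪T x, y - x⟫ ≤ ∫ t in (0 : ℝ)..y, T t :=
      fun x y => by simpa [mul_comm] using hmono.intervalIntegral_add_mul_sub_le 0 x y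
    exact (W2sq_eq_of_forall_le hT hTμ fun S hS hSμ =>
      integral_norm_sub_sq_le_of_subgradient hμ2 hν2 hT hTμ hsub hS hSμ).symm
end

section
/- For u : ℝ² → ℝ twice differentiable with Hessian D²u, and with u_{vv} = ⟨D²u · v, v⟩, if D²u(x) is positive semidefinite then the minimum over all orthonormal bases {v₁, v₂} of ℝ² of u_{v₁v₁}·u_{v₂v₂} equals det(D²u(x)). -/
open Matrix

/-- for a symmetric positive semidefinite 2×2 matrix `M` (the Hessian
`D²u(x)` at a point where it is PSD), the minimum over orthonormal bases `{v₁, v₂}`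
of ℝ² of `⟨Mv₁,v₁⟩·⟨Mv₂,v₂⟩` equals `det M`: this is the variational
characterization of the 2D Monge–Ampère operator. -/
theorem variational_characterization_of_det_2x2
    (M : Matrix (Fin 2) (Fin 2) ℝ) (hM_symm : M.IsSymm) (hM_psd : M.PosSemidef) :
    IsLeast
      {p : ℝ | ∃ v₁ v₂ : Fin 2 → ℝ,
        v₁ ⬝ᵥ v₁ = 1 ∧ v₂ ⬝ᵥ v₂ = 1 ∧ v₁ ⬝ᵥ v₂ = 0 ∧
        p = (M.mulVec v₁ ⬝ᵥ v₁) * (M.mulVec v₂ ⬝ᵥ v₂)}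
      M.det := by
  have hba : M 1 0 = M 0 1 := hM_symm.apply 0 1
  set a := M 0 0 with ha
  set b := M 0 1 with hb
  set c := M 1 1 with hc
  have hdet : M.det = a * c - b * b := by
    rw [Matrix.det_fin_two, hba]
  constructor
  · -- membership: an orthonormal eigenbasis attains the determinant
    by_cases hb0 : b = 0
    · refine ⟨![1, 0], ![0, 1], ?_, ?_, ?_, ?_⟩
      · simp [dotProduct, Fin.sum_univ_two]
      · simp [dotProduct, Fin.sum_univ_two]
      · simp [dotProduct, Fin.sum_univ_two]
      · simp only [dotProduct, mulVec, Fin.sum_univ_two, Matrix.cons_val_zero,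
          Matrix.cons_val_one, Matrix.head_cons, hdet, hba, hb0]
        ring
    · set s := Real.sqrt ((a - c) ^ 2 + 4 * b ^ 2) with hs
      have hs2 : s ^ 2 = (a - c) ^ 2 + 4 * b ^ 2 := by
        rw [hs, Real.sq_sqrt]; positivity
      set t := (c - a + s) / 2 with htdef
      have ht : t ^ 2 + (a - c) * t - b ^ 2 = 0 := by
        rw [htdef]; nlinarith [hs2]
      have hn : b ^ 2 + t ^ 2 > 0 := by positivity
      set r := Real.sqrt (b ^ 2 + t ^ 2) with hr
      have hr2 : r ^ 2 = b ^ 2 + t ^ 2 := Real.sq_sqrt hn.le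
      have hrpos : r > 0 := Real.sqrt_pos.mpr hn
      have hrne : r ≠ 0 := hrpos.ne'
      refine ⟨![b / r, t / r], ![-t / r, b / r], ?_, ?_, ?_, ?_⟩
      · simp only [dotProduct, Fin.sum_univ_two, Matrix.cons_val_zero, Matrix.cons_val_one,
          Matrix.head_cons]
        field_simp
        linarith [hr2]
      · simp only [dotProduct, Fin.sum_univ_two, Matrix.cons_val_zero, Matrix.cons_val_one,
          Matrix.head_cons]
        field_simp
        linarith [hr2]
      · simp only [dotProduct, Fin.sum_univ_two, Matrix.cons_val_zero, Matrix.cons_val_one,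
          Matrix.head_cons]
        field_simp
        ring
      · simp only [dotProduct, mulVec, Fin.sum_univ_two, Matrix.cons_val_zero,
          Matrix.cons_val_one, Matrix.head_cons, hdet, hba]
        have e1 : (M 0 0 * (b / r) + M 0 1 * (t / r)) * (b / r)
            + (b * (b / r) + M 1 1 * (t / r)) * (t / r)
            = (a * b ^ 2 + 2 * b ^ 2 * t + c * t ^ 2) / r ^ 2 := by
          field_simp; ring
        have e2 : (M 0 0 * (-t / r) + M 0 1 * (b / r)) * (-t / r)
            + (b * (-t / r) + M 1 1 * (b / r)) * (b / r)
            = (a * t ^ 2 - 2 * b ^ 2 * t + c * b ^ 2) / r ^ 2 := by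
          field_simp; ring
        rw [e1, e2, div_mul_div_comm]
        have key : (a * b ^ 2 + 2 * b ^ 2 * t + c * t ^ 2)
            * (a * t ^ 2 - 2 * b ^ 2 * t + c * b ^ 2)
            = (a * c - b * b) * (b ^ 2 + t ^ 2) ^ 2 := by
          linear_combination (b ^ 2 * (t ^ 2 + (a - c) * t - b ^ 2)) * ht
        rw [key, ← hr2, eq_div_iff (by positivity : (r ^ 2 * r ^ 2 : ℝ) ≠ 0)]
        ring
  · -- lower bound
    rintro p ⟨v₁, v₂, h1, h2, h3, hp⟩
    simp only [dotProduct, mulVec, Fin.sum_univ_two] at h1 h2 h3 hp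
    set x1 := v₁ 0; set y1 := v₁ 1; set x2 := v₂ 0; set y2 := v₂ 1
    have hD : (x1 * y2 - y1 * x2) ^ 2 = 1 := by
      linear_combination (x2 ^ 2 + y2 ^ 2) * h1 + h2 - (x1 * x2 + y1 * y2) * h3
    have key : p = M.det + (a * x1 * x2 + b * (x1 * y2 + y1 * x2) + c * y1 * y2) ^ 2 := by
      rw [hp, hdet, hba]
      linear_combination (a * c - b * b) * hD
    rw [key]
    linarith [sq_nonneg (a * x1 * x2 + b * (x1 * y2 + y1 * x2) + c * y1 * y2)]
end
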